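/- arXiv:1810.10692 — 2 statements merged into one kernel-verified Lean document; each statement's English description precedes it below -/
import Mathlib

section
/- For every integer m ≥ 1, \(\int_0^{\infty} x^{2m+1}\,\frac{e^{-x}}{(1+e^{-x})^{2}}\,dx = (-1)^{m+1}\,(1-2^{-2m})\,\frac{(2\pi)^{2m+1}}{2}\,\int_0^{1} B_{2m+1}(u)\,\cot(\pi u)\,du\), where \(B_{2m+1}(u)\) is the (2m+1)-th Bernoulli polynomial. -/
/-!
Expanding the logistic density as `∑ (-1)^(n+1) n e^(-nx)` and integrating term by term against
`x^s` gives `s! η(s)`, and `η(s) = (1 - 2^(1-s)) ζ(s)`. For odd `s = 2m+1`, `ζ(s)` is recovered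
from the Fourier series `∑ sin(2πnu) / n^s`, which is a multiple of `B_s(u)` on `[0, 1]`, by
multiplying with `cot(πu)` and integrating: `sin(2πnu) cot(πu)` is a cosine polynomial with
constant term `1`, so it integrates to `1` for every `n ≥ 1`.
-/

open Real MeasureTheory Set intervalIntegral
open scoped Nat

-- At `n = 0` both sides vanish through the convention `a / 0 = 0`, which needs `s ≠ 0`.
lemma natCast_mul_div_pow_succ (a : ℝ) (n : ℕ) {s : ℕ} (hs : s ≠ 0) :
    n * (a / (n : ℝ) ^ (s + 1)) = a / (n : ℝ) ^ s := by
  rcases eq_or_ne n 0 with rfl | hn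
  · simp [hs]
  · field_simp; ring

lemma integral_pow_mul_exp_neg_mul_Ioi (s : ℕ) {r : ℝ} (hr : 0 < r) :
    ∫ x in Ioi (0 : ℝ), x ^ s * exp (-(r * x)) = s ! / r ^ (s + 1) := by
  have h := integral_rpow_mul_exp_neg_mul_Ioi (a := s + 1) (by positivity) hr
  rw [add_sub_cancel_right, Gamma_nat_eq_factorial, ← Nat.cast_succ, rpow_natCast] at h
  simp_rw [rpow_natCast] at h
  rw [h, one_div_pow, one_div_mul_eq_div]

lemma integrableOn_pow_mul_exp_neg_mul_Ioi (s : ℕ) {r : ℝ} (hr : 0 < r) :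
    IntegrableOn (fun x : ℝ => x ^ s * exp (-(r * x))) (Ioi 0) :=
  Integrable.of_integral_ne_zero <| by
    rw [integral_pow_mul_exp_neg_mul_Ioi s hr]; positivity

lemma hasSum_logistic_density {x : ℝ} (hx : 0 < x) :
    HasSum (fun n : ℕ => (-1) ^ (n + 1) * (n * exp (-(n * x))))
      (exp (-x) / (1 + exp (-x)) ^ 2) := by
  have hr : ‖-exp (-x)‖ < 1 := by
    rw [norm_neg, norm_of_nonneg (exp_pos _).le, exp_lt_one_iff]; linarith
  have h := (hasSum_coe_mul_geometric_of_norm_lt_one hr).neg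
  rw [sub_neg_eq_add, neg_div, neg_neg] at h
  refine h.congr_fun fun n => ?_
  rw [neg_pow (exp (-x)), ← exp_nat_mul, mul_neg]
  ring

lemma integral_pow_mul_natCast_mul_exp_neg_mul_Ioi {s : ℕ} (hs : s ≠ 0) (n : ℕ) :
    ∫ x in Ioi (0 : ℝ), x ^ s * (n * exp (-(n * x))) = s ! / (n : ℝ) ^ s := by
  rcases eq_or_ne n 0 with rfl | hn
  · simp [hs]
  simp_rw [mul_left_comm _ (n : ℝ)]
  rw [MeasureTheory.integral_const_mul, integral_pow_mul_exp_neg_mul_Ioi s (by positivity),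
    natCast_mul_div_pow_succ _ _ hs]

lemma integrableOn_pow_mul_natCast_mul_exp_neg_mul_Ioi (s n : ℕ) :
    IntegrableOn (fun x : ℝ => x ^ s * (n * exp (-(n * x)))) (Ioi 0) := by
  rcases eq_or_ne n 0 with rfl | hn
  · simp
  simp_rw [mul_left_comm _ (n : ℝ)]
  exact (integrableOn_pow_mul_exp_neg_mul_Ioi s (by positivity)).const_mul _

theorem integral_pow_mul_logistic_density {s : ℕ} (hs : 2 ≤ s) :
    ∫ x in Ioi (0 : ℝ), x ^ s * (exp (-x) / (1 + exp (-x)) ^ 2) =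
      s ! * ∑' n : ℕ, (-1) ^ (n + 1) / (n : ℝ) ^ s := by
  set F : ℕ → ℝ → ℝ := fun n x => x ^ s * ((-1) ^ (n + 1) * (n * exp (-(n * x))))
  have hF : ∀ n, F n = fun x => (-1) ^ (n + 1) * (x ^ s * (n * exp (-(n * x)))) :=
    fun n => funext fun x => mul_left_comm _ _ _
  have hF_int (n : ℕ) : IntegrableOn (F n) (Ioi 0) := by
    rw [hF]; exact (integrableOn_pow_mul_natCast_mul_exp_neg_mul_Ioi s n).const_mul _
  have hF_norm (n : ℕ) : ∫ x in Ioi (0 : ℝ), ‖F n x‖ = s ! / (n : ℝ) ^ s := by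
    rw [← integral_pow_mul_natCast_mul_exp_neg_mul_Ioi (by omega) n]
    refine setIntegral_congr_fun measurableSet_Ioi fun x (hx : 0 < x) => ?_
    rw [hF, norm_mul, norm_pow, norm_neg, norm_one, one_pow, one_mul,
      norm_of_nonneg (by positivity)]
  have hF_summable : Summable fun n => ∫ x in Ioi (0 : ℝ), ‖F n x‖ := by
    simp_rw [hF_norm, div_eq_mul_one_div (s ! : ℝ)]
    exact (summable_one_div_nat_pow.mpr (by omega)).mul_left _
  calc ∫ x in Ioi (0 : ℝ), x ^ s * (exp (-x) / (1 + exp (-x)) ^ 2)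
      = ∫ x in Ioi (0 : ℝ), ∑' n, F n x :=
        setIntegral_congr_fun measurableSet_Ioi fun x hx =>
          ((hasSum_logistic_density hx).mul_left (x ^ s)).tsum_eq.symm
    _ = ∑' n, ∫ x in Ioi (0 : ℝ), F n x :=
        (integral_tsum_of_summable_integral_norm hF_int hF_summable).symm
    _ = ∑' n : ℕ, s ! * ((-1) ^ (n + 1) / (n : ℝ) ^ s) := by
        refine tsum_congr fun n => ?_
        rw [hF, MeasureTheory.integral_const_mul,
          integral_pow_mul_natCast_mul_exp_neg_mul_Ioi (by omega)]
        ring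
    _ = s ! * ∑' n : ℕ, (-1) ^ (n + 1) / (n : ℝ) ^ s := tsum_mul_left

lemma tsum_neg_one_pow_succ_div_pow {s : ℕ} (hs : 2 ≤ s) :
    ∑' n : ℕ, (-1) ^ (n + 1) / (n : ℝ) ^ s = (1 - 2 / 2 ^ s) * ∑' n : ℕ, 1 / (n : ℝ) ^ s := by
  set ζ := ∑' n : ℕ, 1 / (n : ℝ) ^ s
  have hsum : Summable fun n : ℕ => 1 / (n : ℝ) ^ s := summable_one_div_nat_pow.mpr (by omega)
  have heven : HasSum (fun k : ℕ => 1 / ((2 * k : ℕ) : ℝ) ^ s) (ζ / 2 ^ s) := by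
    refine (hsum.hasSum.div_const _).congr_fun fun k => ?_
    rw [Nat.cast_mul, Nat.cast_two, mul_pow, div_div, mul_comm]
  have hodd : HasSum (fun k : ℕ => 1 / ((2 * k + 1 : ℕ) : ℝ) ^ s) (ζ - ζ / 2 ^ s) := by
    have hodd_sum : Summable fun k : ℕ => 1 / ((2 * k + 1 : ℕ) : ℝ) ^ s :=
      hsum.comp_injective fun a b h => by simpa using h
    have hsplit := tsum_even_add_odd (f := fun n : ℕ => 1 / (n : ℝ) ^ s) heven.summable hodd_sum
    rw [heven.tsum_eq] at hsplit
    exact eq_sub_of_add_eq' hsplit ▸ hodd_sum.hasSum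
  have h := HasSum.even_add_odd (f := fun n : ℕ => (-1) ^ (n + 1) / (n : ℝ) ^ s)
    (heven.neg.congr_fun fun k => by rw [pow_succ, pow_mul]; simp [neg_div])
    (hodd.congr_fun fun k => by rw [pow_succ, pow_succ, pow_mul]; simp)
  rw [h.tsum_eq]
  ring

noncomputable def cotKernel (n : ℕ) (u : ℝ) : ℝ :=
  ∑ j ∈ Finset.range n, (cos (2 * π * j * u) + cos (2 * π * (j + 1 : ℕ) * u))

lemma sin_mul_cos_eq_sin_mul_cotKernel (n : ℕ) (u : ℝ) :
    sin (2 * π * n * u) * cos (π * u) = sin (π * u) * cotKernel n u := by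
  induction n with
  | zero => simp [cotKernel]
  | succ n ih =>
    rw [cotKernel, Finset.sum_range_succ, mul_add, ← cotKernel, ← ih]
    have h : 2 * π * ((n + 1 : ℕ) : ℝ) * u = 2 * π * n * u + 2 * (π * u) := by push_cast; ring
    rw [h, sin_add, cos_add, sin_two_mul, cos_two_mul]
    linear_combination (2 * sin (2 * π * n * u) * cos (π * u)) * sin_sq_add_cos_sq (π * u)

lemma sin_mul_cot_eq_cotKernel (n : ℕ) {u : ℝ} (hu : u ∈ Ioo (0 : ℝ) 1) :
    sin (2 * π * n * u) * cot (π * u) = cotKernel n u := by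
  have hsin : sin (π * u) ≠ 0 :=
    (sin_pos_of_pos_of_lt_pi (by nlinarith [pi_pos, hu.1]) (by nlinarith [pi_pos, hu.2])).ne'
  rw [cot_eq_cos_div_sin, mul_div_assoc', div_eq_iff hsin, sin_mul_cos_eq_sin_mul_cotKernel,
    mul_comm]

lemma abs_cotKernel_le (n : ℕ) (u : ℝ) : |cotKernel n u| ≤ 2 * n := by
  calc |cotKernel n u|
      ≤ ∑ j ∈ Finset.range n, (|cos (2 * π * j * u)| + |cos (2 * π * (j + 1 : ℕ) * u)|) :=
        (Finset.abs_sum_le_sum_abs _ _).trans (Finset.sum_le_sum fun j _ => abs_add_le _ _)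
    _ ≤ ∑ j ∈ Finset.range n, (1 + 1 : ℝ) :=
        Finset.sum_le_sum fun j _ => add_le_add (abs_cos_le_one _) (abs_cos_le_one _)
    _ = 2 * n := by rw [Finset.sum_const, Finset.card_range, nsmul_eq_mul]; ring

lemma continuous_cotKernel (n : ℕ) : Continuous (cotKernel n) := by
  unfold cotKernel; fun_prop

lemma integral_cos_two_pi_nat_mul (k : ℕ) :
    ∫ u in (0 : ℝ)..1, cos (2 * π * k * u) = if k = 0 then 1 else 0 := by
  split_ifs with hk
  · simp [hk]
  · have hc : 2 * π * k ≠ 0 := by positivity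
    rw [intervalIntegral.integral_comp_mul_left cos hc, integral_cos, mul_zero, mul_one, sin_zero,
      sub_zero, show 2 * π * k = ((2 * k : ℕ) : ℝ) * π by push_cast; ring, sin_nat_mul_pi,
      smul_zero]

lemma integral_cotKernel {n : ℕ} (hn : n ≠ 0) : ∫ u in (0 : ℝ)..1, cotKernel n u = 1 := by
  have hint (k : ℕ) : IntervalIntegrable (fun u => cos (2 * π * k * u)) volume 0 1 :=
    (by fun_prop : Continuous fun u => cos (2 * π * k * u)).intervalIntegrable 0 1
  unfold cotKernel
  rw [intervalIntegral.integral_finsetSum fun j _ => (hint j).add (hint (j + 1))]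
  simp_rw [intervalIntegral.integral_add (hint _) (hint _), integral_cos_two_pi_nat_mul,
    Nat.add_one_ne_zero, if_false, add_zero]
  simp [Nat.pos_of_ne_zero hn]

lemma summable_integral_norm_one_div_pow_mul_cotKernel {t : ℕ} (ht : 2 ≤ t) :
    Summable fun n : ℕ => ∫ u in Ioo (0 : ℝ) 1, ‖1 / (n : ℝ) ^ (t + 1) * cotKernel n u‖ := by
  have hle (n : ℕ) (u : ℝ) : ‖1 / (n : ℝ) ^ (t + 1) * cotKernel n u‖ ≤ 2 / (n : ℝ) ^ t :=
    calc ‖1 / (n : ℝ) ^ (t + 1) * cotKernel n u‖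
        = 1 / (n : ℝ) ^ (t + 1) * |cotKernel n u| := by
          rw [norm_mul, norm_of_nonneg (by positivity), norm_eq_abs]
      _ ≤ 1 / (n : ℝ) ^ (t + 1) * (2 * n) := by gcongr; exact abs_cotKernel_le n u
      _ = 2 / (n : ℝ) ^ t := by rw [← natCast_mul_div_pow_succ _ _ (by omega : t ≠ 0)]; ring
  have hint_le (n : ℕ) :
      ∫ u in Ioo (0 : ℝ) 1, ‖1 / (n : ℝ) ^ (t + 1) * cotKernel n u‖ ≤ 2 / (n : ℝ) ^ t := by
    refine (le_norm_self _).trans ((norm_setIntegral_le_of_norm_le_const (by simp)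
      fun u _ => (norm_norm _).trans_le (hle n u)).trans_eq ?_)
    rw [volume_real_Ioo_of_le zero_le_one, sub_zero, mul_one]
  refine .of_nonneg_of_le (fun n => integral_nonneg fun u => norm_nonneg _) hint_le ?_
  simp_rw [div_eq_mul_one_div (2 : ℝ)]
  exact (summable_one_div_nat_pow.mpr (by omega)).mul_left _

lemma hasSum_one_div_pow_mul_cotKernel {k : ℕ} (hk : k ≠ 0) {u : ℝ} (hu : u ∈ Ioo (0 : ℝ) 1) :
    HasSum (fun n : ℕ => 1 / (n : ℝ) ^ (2 * k + 1) * cotKernel n u)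
      ((-1) ^ (k + 1) * (2 * π) ^ (2 * k + 1) / 2 / (2 * k + 1)! *
        ((Polynomial.aeval u (Polynomial.bernoulli (2 * k + 1)) : ℝ) * cot (π * u))) := by
  have h := (hasSum_one_div_nat_pow_mul_sin hk (Ioo_subset_Icc_self hu)).mul_right (cot (π * u))
  rw [Polynomial.eval_map, ← Polynomial.aeval_def, mul_assoc] at h
  refine h.congr_fun fun n => ?_
  rw [mul_assoc, sin_mul_cot_eq_cotKernel n hu]

theorem tsum_one_div_pow_eq_integral_bernoulli_mul_cot {k : ℕ} (hk : k ≠ 0) :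
    ∑' n : ℕ, 1 / (n : ℝ) ^ (2 * k + 1) =
      (-1) ^ (k + 1) * (2 * π) ^ (2 * k + 1) / 2 / (2 * k + 1)! *
        ∫ u in (0 : ℝ)..1,
          (Polynomial.aeval u (Polynomial.bernoulli (2 * k + 1)) : ℝ) * cot (π * u) := by
  set H : ℕ → ℝ → ℝ := fun n u => 1 / (n : ℝ) ^ (2 * k + 1) * cotKernel n u
  have hH_int (n : ℕ) : IntegrableOn (H n) (Ioo 0 1) :=
    (continuous_const.mul (continuous_cotKernel n)).integrableOn_Icc.mono_set Ioo_subset_Icc_self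
  have hH_integral (n : ℕ) : ∫ u in Ioo (0 : ℝ) 1, H n u = 1 / (n : ℝ) ^ (2 * k + 1) := by
    rw [← integral_Ioc_eq_integral_Ioo, ← integral_of_le zero_le_one,
      intervalIntegral.integral_const_mul]
    rcases eq_or_ne n 0 with rfl | hn
    · simp
    · rw [integral_cotKernel hn, mul_one]
  calc ∑' n : ℕ, 1 / (n : ℝ) ^ (2 * k + 1)
      = ∑' n, ∫ u in Ioo (0 : ℝ) 1, H n u := tsum_congr fun n => (hH_integral n).symm
    _ = ∫ u in Ioo (0 : ℝ) 1, ∑' n, H n u := integral_tsum_of_summable_integral_norm hH_int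
        (summable_integral_norm_one_div_pow_mul_cotKernel (by omega))
    _ = ∫ u in Ioo (0 : ℝ) 1, (-1) ^ (k + 1) * (2 * π) ^ (2 * k + 1) / 2 / (2 * k + 1)! *
          ((Polynomial.aeval u (Polynomial.bernoulli (2 * k + 1)) : ℝ) * cot (π * u)) :=
        setIntegral_congr_fun measurableSet_Ioo fun u hu =>
          (hasSum_one_div_pow_mul_cotKernel hk hu).tsum_eq
    _ = _ := by
        rw [MeasureTheory.integral_const_mul, integral_of_le zero_le_one,
          integral_Ioc_eq_integral_Ioo]

/-- For every integer `m ≥ 1`,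
`∫_0^∞ x^(2m+1) e^(-x)/(1+e^(-x))^2 dx
   = (-1)^(m+1) (1 - 2^(-2m)) ((2π)^(2m+1)/2) ∫_0^1 B_{2m+1}(u) cot(π u) du`,
where `B_{2m+1}` is the `(2m+1)`-th Bernoulli polynomial (Mathlib's
`Polynomial.bernoulli`). -/
theorem normalizing_integral_odd_power (m : ℕ) (hm : 1 ≤ m) :
    ∫ x in Ioi (0 : ℝ), x ^ (2 * m + 1) * (Real.exp (-x) / (1 + Real.exp (-x)) ^ 2) =
      (-1 : ℝ) ^ (m + 1) * (1 - ((2 : ℝ) ^ (2 * m))⁻¹) * ((2 * π) ^ (2 * m + 1) / 2) *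
        ∫ u in (0 : ℝ)..1,
          (Polynomial.aeval u (Polynomial.bernoulli (2 * m + 1)) : ℝ) *
            Real.cot (π * u) := by
  rw [integral_pow_mul_logistic_density (by omega), tsum_neg_one_pow_succ_div_pow (by omega),
    tsum_one_div_pow_eq_integral_bernoulli_mul_cot (by omega : m ≠ 0)]
  field_simp
  ring
end

section
/- Let a, b, r > 0, let n be a positive integer with n/2 > r, and let l > 0 be real. Let R be the random variable on (0, ∞) with probability density \(f_R(v)= v^{n/2-1} g(v)\,\big/\int_0^{\infty}t^{n/2-1}g(t)\,dt\), where \(g(u)=\frac{e^{-bu}}{(1+e^{-au})^{r}}\). Then \(E(R^{l}) = a^{-l}\,\frac{\Gamma(n/2+l)\,\sum_{k=0}^{\infty}\frac{\Gamma(r+k)}{\Gamma(r)k!}\frac{(-1)^{k}}{(k+b/a)^{n/2+l}}}{\Gamma(n/2)\,\sum_{k=0}^{\infty}\frac{\Gamma(r+k)}{\Gamma(r)k!}\frac{(-1)^{k}}{(k+b/a)^{n/2}}}\), where both series converge absolutely. -/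
/-!
By the binomial series, `(1 + e^{-av})^{-r} = ∑ₖ (-1)^k multichoose r k e^{-akv}` for `v > 0`,
where `multichoose r k = (r)ₖ / k! = Γ(r + k) / (Γ(r) k!)`. Integrating term by term against
`v^{s-1} e^{-bv}` turns every term into a Gamma integral, so that
`∫₀^∞ v^{s-1} g(v) dv = a^{-s} Γ(s) Φ*_r(-1, s, b/a)`. The interchange is legitimate because
Euler's limit formula gives `multichoose r k = O(k^{r-1})`, so the series of absolute values
converges as soon as `s > r`. The moment `E(R^l)` is the quotient of this identity at
`s = n/2 + l` and `s = n/2`.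
-/

open Real MeasureTheory Set Filter Topology Asymptotics Finset
open scoped Nat

theorem ascPochhammer_eval_eq_prod_range {R : Type*} [CommSemiring R] (n : ℕ) (r : R) :
    (ascPochhammer R n).eval r = ∏ j ∈ range n, (r + j) := by
  induction n with
  | zero => simp
  | succ n ih => rw [ascPochhammer_succ_eval, ih, prod_range_succ]

theorem Ring.multichoose_eq_prod_div {K : Type*} [Field K] [CharZero K] [BinomialRing K]
    (r : K) (k : ℕ) :
    Ring.multichoose r k = (∏ j ∈ range k, (r + j)) / k ! := by
  have h := Ring.factorial_nsmul_multichoose_eq_ascPochhammer r k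
  rw [Polynomial.ascPochhammer_smeval_eq_eval, ascPochhammer_eval_eq_prod_range, nsmul_eq_mul] at h
  rw [← h, mul_div_cancel_left₀ _ (Nat.cast_ne_zero.2 k.factorial_ne_zero)]

theorem Ring.multichoose_nonneg {K : Type*} [Field K] [LinearOrder K] [IsStrictOrderedRing K]
    [BinomialRing K] {r : K} (hr : 0 ≤ r) (k : ℕ) : 0 ≤ Ring.multichoose r k := by
  rw [Ring.multichoose_eq_prod_div]
  positivity

theorem Real.Gamma_add_nat_eq_mul_prod {r : ℝ} (hr : 0 < r) (n : ℕ) :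
    Gamma (r + n) = Gamma r * ∏ j ∈ range n, (r + j) := by
  induction n with
  | zero => simp
  | succ n ih =>
    rw [prod_range_succ, Nat.cast_succ, ← add_assoc, Gamma_add_one (by positivity), ih]
    ring

theorem Ring.multichoose_eq_Gamma_div {r : ℝ} (hr : 0 < r) (k : ℕ) :
    Ring.multichoose r k = Gamma (r + k) / (Gamma r * k !) := by
  rw [Ring.multichoose_eq_prod_div, Real.Gamma_add_nat_eq_mul_prod hr,
    mul_div_mul_left _ _ (Gamma_pos_of_pos hr).ne']

theorem Ring.choose_neg_eq_neg_one_pow_mul_multichoose {R : Type*} [Ring R] [BinomialRing R]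
    (r : R) (k : ℕ) :
    Ring.choose (-r) k = (-1) ^ k * Ring.multichoose r k := by
  rw [Ring.choose_neg', Units.smul_def, zsmul_eq_mul, Int.cast_negOnePow_natCast]

theorem Real.hasSum_one_add_rpow_neg (r : ℝ) {x : ℝ} (hx : |x| < 1) :
    HasSum (fun k : ℕ => (-1) ^ k * Ring.multichoose r k * x ^ k) ((1 + x) ^ (-r)) := by
  have hseries := Real.one_add_rpow_hasFPowerSeriesOnBall_zero (a := -r) |>.hasSum (y := x)
    (by simpa [enorm_eq_nnnorm, ← NNReal.coe_lt_coe] using hx)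
  simpa [binomialSeries, FormalMultilinearSeries.coeff_ofScalars,
    Ring.choose_neg_eq_neg_one_pow_mul_multichoose, mul_comm] using hseries

theorem Ring.multichoose_eq_rpow_mul_div_GammaSeq {r : ℝ} (hr : 0 < r) {k : ℕ} (hk : k ≠ 0) :
    Ring.multichoose r k = (k : ℝ) ^ (r - 1) * (k / (k + r) / GammaSeq r k) := by
  have hk' : (0 : ℝ) < k := by positivity
  rw [Ring.multichoose_eq_prod_div, GammaSeq, prod_range_succ, rpow_sub_one hk'.ne']
  have : (0 : ℝ) < ∏ j ∈ range k, (r + j) := prod_pos fun j _ => by positivity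
  field_simp
  ring

theorem Ring.isBigO_multichoose {r : ℝ} (hr : 0 < r) :
    (fun k : ℕ => Ring.multichoose r k) =O[atTop] fun k : ℕ => (k : ℝ) ^ (r - 1) := by
  have hlim : Tendsto (fun k : ℕ => (k : ℝ) / (k + r) / GammaSeq r k) atTop (𝓝 (1 / Gamma r)) :=
    (tendsto_natCast_div_add_atTop r).div (GammaSeq_tendsto_Gamma r) (Gamma_pos_of_pos hr).ne'
  have hmul := (isBigO_refl (fun k : ℕ => (k : ℝ) ^ (r - 1)) atTop).mul (hlim.isBigO_one ℝ)
  simp only [mul_one] at hmul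
  refine hmul.congr' ?_ EventuallyEq.rfl
  filter_upwards [eventually_ne_atTop 0] with k hk
  exact (Ring.multichoose_eq_rpow_mul_div_GammaSeq hr hk).symm

theorem Ring.summable_multichoose_div_rpow {r c s : ℝ} (hr : 0 < r) (hc : 0 < c) (hs : r < s) :
    Summable fun k : ℕ => Ring.multichoose r k / (k + c) ^ s := by
  have hshift : (fun k : ℕ => ((k : ℝ) + c) ^ (-s)) =O[atTop] fun k : ℕ => (k : ℝ) ^ (-s) := by
    refine IsBigO.of_bound 1 ?_
    filter_upwards [eventually_ne_atTop 0] with k hk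
    have hk' : (0 : ℝ) < k := by positivity
    rw [one_mul, norm_of_nonneg (by positivity), norm_of_nonneg (by positivity)]
    exact rpow_le_rpow_of_nonpos hk' (by linarith) (by linarith)
  have hprod := (Ring.isBigO_multichoose hr).mul hshift
  refine summable_of_isBigO_nat' (summable_nat_rpow.2 (by linarith : r - 1 + -s < -1)) ?_
  refine hprod.congr' (Eventually.of_forall fun k => ?_) ?_
  · simp only [rpow_neg (by positivity : (0 : ℝ) ≤ k + c), div_eq_mul_inv]
  · filter_upwards [eventually_ne_atTop 0] with k hk
    rw [← rpow_add (by positivity)]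

theorem integral_rpow_mul_exp_neg_mul_mul_Ioi {a s x : ℝ} (ha : 0 < a) (hs : 0 < s) (hx : 0 < x) :
    ∫ v in Ioi (0 : ℝ), v ^ (s - 1) * exp (-(a * x * v)) = a ^ (-s) * Gamma s / x ^ s := by
  rw [integral_rpow_mul_exp_neg_mul_Ioi hs (by positivity), one_div, inv_rpow (by positivity),
    mul_rpow ha.le hx.le, rpow_neg ha.le]
  ring

theorem hasSum_exp_div_one_add_exp_rpow (r : ℝ) {a b v : ℝ} (ha : 0 < a) (hv : 0 < v) :
    HasSum (fun k : ℕ => (-1) ^ k * Ring.multichoose r k * exp (-(a * (k + b / a) * v)))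
      (exp (-(b * v)) / (1 + exp (-(a * v))) ^ r) := by
  have hx : |exp (-(a * v))| < 1 := by
    rw [abs_of_pos (exp_pos _), exp_lt_one_iff]
    nlinarith
  have hterm : ∀ k : ℕ, (-1) ^ k * Ring.multichoose r k * exp (-(a * (k + b / a) * v)) =
      exp (-(b * v)) * ((-1) ^ k * Ring.multichoose r k * exp (-(a * v)) ^ k) := by
    intro k
    rw [← exp_nat_mul, mul_left_comm, ← exp_add]
    congr 2
    field_simp
    ring
  rw [funext hterm, div_eq_mul_inv, ← rpow_neg (by positivity)]
  exact (hasSum_one_add_rpow_neg r hx).mul_left _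

theorem integral_rpow_mul_exp_div_one_add_exp_rpow {a b r s : ℝ} (ha : 0 < a) (hb : 0 < b)
    (hr : 0 < r) (hs : r < s) :
    ∫ v in Ioi (0 : ℝ), v ^ (s - 1) * (exp (-(b * v)) / (1 + exp (-(a * v))) ^ r) =
      a ^ (-s) * (Gamma s *
        ∑' k : ℕ, Ring.multichoose r k * ((-1) ^ k / ((k : ℝ) + b / a) ^ s)) := by
  have hs0 : 0 < s := hr.trans hs
  have hc : 0 < b / a := div_pos hb ha
  set G : ℕ → ℝ → ℝ := fun k v => v ^ (s - 1) * exp (-(a * (k + b / a) * v))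
  set F : ℕ → ℝ → ℝ := fun k v => (-1) ^ k * Ring.multichoose r k * G k v
  have hG : ∀ k : ℕ, ∫ v in Ioi (0 : ℝ), G k v = a ^ (-s) * Gamma s / ((k : ℝ) + b / a) ^ s :=
    fun k => integral_rpow_mul_exp_neg_mul_mul_Ioi ha hs0 (by positivity)
  have hG_int : ∀ k : ℕ, Integrable (G k) (volume.restrict (Ioi 0)) := fun k =>
    .of_integral_ne_zero (by rw [hG k]; positivity)
  have hF_norm : ∀ k : ℕ, ∫ v in Ioi (0 : ℝ), ‖F k v‖ =
      Ring.multichoose r k * ∫ v in Ioi (0 : ℝ), G k v := by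
    intro k
    rw [← integral_const_mul]
    refine setIntegral_congr_fun measurableSet_Ioi fun v (hv : 0 < v) => ?_
    simp only [F, G, norm_mul, norm_pow, norm_neg, one_pow, norm_one, one_mul,
      norm_of_nonneg (Ring.multichoose_nonneg hr.le k), norm_of_nonneg (rpow_nonneg hv.le _),
      norm_of_nonneg (exp_pos _).le]
  have hsummable : Summable fun k : ℕ => ∫ v in Ioi (0 : ℝ), ‖F k v‖ := by
    refine ((Ring.summable_multichoose_div_rpow hr hc hs).mul_left (a ^ (-s) * Gamma s)).congr
      fun k => ?_
    rw [hF_norm, hG]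
    ring
  calc _ = ∫ v in Ioi (0 : ℝ), ∑' k, F k v := by
        refine setIntegral_congr_fun measurableSet_Ioi fun v (hv : 0 < v) => ?_
        simpa only [F, G, mul_left_comm _ (v ^ (s - 1))] using
          ((hasSum_exp_div_one_add_exp_rpow r ha hv).mul_left (v ^ (s - 1))).tsum_eq.symm
    _ = ∑' k, ∫ v in Ioi (0 : ℝ), F k v :=
        (integral_tsum_of_summable_integral_norm (fun k => (hG_int k).const_mul _) hsummable).symm
    _ = ∑' k : ℕ, a ^ (-s) *
          (Gamma s * (Ring.multichoose r k * ((-1) ^ k / ((k : ℝ) + b / a) ^ s))) := by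
        congr 1 with k
        simp only [F, integral_const_mul, hG]
        ring
    _ = _ := by rw [tsum_mul_left, tsum_mul_left]

theorem setIntegral_Ioi_rpow_mul_rpow_mul_div (g : ℝ → ℝ) (s l D : ℝ) :
    ∫ v in Ioi (0 : ℝ), v ^ l * (v ^ (s - 1) * g v / D) =
      (∫ v in Ioi (0 : ℝ), v ^ (s + l - 1) * g v) / D := by
  rw [← integral_div]
  refine setIntegral_congr_fun measurableSet_Ioi fun v (hv : 0 < v) => ?_
  rw [show s + l - 1 = l + (s - 1) by ring, rpow_add hv]
  ring

theorem radial_moment_formula_general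
    (a b r l : ℝ) (n : ℕ) (ha : 0 < a) (hb : 0 < b) (hr : 0 < r)
    (hl : 0 < l) (hnr : r < (n : ℝ) / 2)
    (g : ℝ → ℝ) (hg : g = fun u => Real.exp (-(b * u)) / (1 + Real.exp (-(a * u))) ^ r) :
    Summable (fun k : ℕ =>
      |Real.Gamma (r + (k : ℝ)) / (Real.Gamma r * (k.factorial : ℝ)) *
        ((-1 : ℝ) ^ k / ((k : ℝ) + b / a) ^ ((n : ℝ) / 2 + l))|) ∧
    Summable (fun k : ℕ =>
      |Real.Gamma (r + (k : ℝ)) / (Real.Gamma r * (k.factorial : ℝ)) *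
        ((-1 : ℝ) ^ k / ((k : ℝ) + b / a) ^ ((n : ℝ) / 2))|) ∧
    ∫ v in Ioi (0 : ℝ),
        v ^ l * (v ^ ((n : ℝ) / 2 - 1) * g v /
          ∫ t in Ioi (0 : ℝ), t ^ ((n : ℝ) / 2 - 1) * g t) =
      a ^ (-l) *
        (Real.Gamma ((n : ℝ) / 2 + l) *
          ∑' k : ℕ, Real.Gamma (r + (k : ℝ)) / (Real.Gamma r * (k.factorial : ℝ)) *
            ((-1 : ℝ) ^ k / ((k : ℝ) + b / a) ^ ((n : ℝ) / 2 + l))) /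
        (Real.Gamma ((n : ℝ) / 2) *
          ∑' k : ℕ, Real.Gamma (r + (k : ℝ)) / (Real.Gamma r * (k.factorial : ℝ)) *
            ((-1 : ℝ) ^ k / ((k : ℝ) + b / a) ^ ((n : ℝ) / 2))) := by
  have hc : 0 < b / a := div_pos hb ha
  have hnlr : r < (n : ℝ) / 2 + l := by linarith
  have habs : ∀ s, r < s →
      Summable fun k : ℕ => |Ring.multichoose r k * ((-1) ^ k / ((k : ℝ) + b / a) ^ s)| :=
    fun s hs => (Ring.summable_multichoose_div_rpow hr hc hs).congr fun k => by
      rw [abs_mul, abs_div, abs_pow, abs_neg, abs_one, one_pow, mul_one_div,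
        abs_of_nonneg (Ring.multichoose_nonneg hr.le k), abs_of_pos (by positivity)]
  simp only [← Ring.multichoose_eq_Gamma_div hr]
  refine ⟨habs _ hnlr, habs _ hnr, ?_⟩
  subst hg
  rw [setIntegral_Ioi_rpow_mul_rpow_mul_div,
    integral_rpow_mul_exp_div_one_add_exp_rpow ha hb hr hnlr,
    integral_rpow_mul_exp_div_one_add_exp_rpow ha hb hr hnr, neg_add, rpow_add ha, mul_assoc,
    mul_div_mul_left _ _ (rpow_pos_of_pos ha _).ne']

/-- Let `a, b, r > 0`, let `n` be a positive integer with `n/2 > r`, and let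
`l > 0`.  Let `R` have density `f_R(v) = v^(n/2-1) g(v) / ∫_0^∞ t^(n/2-1) g(t) dt` on
`(0,∞)` with `g(u) = e^(-bu)/(1+e^(-au))^r`.  Then
`E(R^l) = a^(-l) Γ(n/2+l) Φ*_r(-1, n/2+l, b/a) / (Γ(n/2) Φ*_r(-1, n/2, b/a))`
with both Hurwitz–Lerch series (written out explicitly) converging absolutely. -/
theorem radial_moment_formula
    (a b r l : ℝ) (n : ℕ) (hn : 0 < n) (ha : 0 < a) (hb : 0 < b) (hr : 0 < r)
    (hl : 0 < l) (hnr : r < (n : ℝ) / 2)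
    (g : ℝ → ℝ) (hg : g = fun u => Real.exp (-(b * u)) / (1 + Real.exp (-(a * u))) ^ r) :
    Summable (fun k : ℕ =>
      |Real.Gamma (r + (k : ℝ)) / (Real.Gamma r * (k.factorial : ℝ)) *
        ((-1 : ℝ) ^ k / ((k : ℝ) + b / a) ^ ((n : ℝ) / 2 + l))|) ∧
    Summable (fun k : ℕ =>
      |Real.Gamma (r + (k : ℝ)) / (Real.Gamma r * (k.factorial : ℝ)) *
        ((-1 : ℝ) ^ k / ((k : ℝ) + b / a) ^ ((n : ℝ) / 2))|) ∧
    ∫ v in Ioi (0 : ℝ),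
        v ^ l * (v ^ ((n : ℝ) / 2 - 1) * g v /
          ∫ t in Ioi (0 : ℝ), t ^ ((n : ℝ) / 2 - 1) * g t) =
      a ^ (-l) *
        (Real.Gamma ((n : ℝ) / 2 + l) *
          ∑' k : ℕ, Real.Gamma (r + (k : ℝ)) / (Real.Gamma r * (k.factorial : ℝ)) *
            ((-1 : ℝ) ^ k / ((k : ℝ) + b / a) ^ ((n : ℝ) / 2 + l))) /
        (Real.Gamma ((n : ℝ) / 2) *
          ∑' k : ℕ, Real.Gamma (r + (k : ℝ)) / (Real.Gamma r * (k.factorial : ℝ)) *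
            ((-1 : ℝ) ^ k / ((k : ℝ) + b / a) ^ ((n : ℝ) / 2))) :=
  radial_moment_formula_general a b r l n ha hb hr hl hnr g hg
end
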